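/- Let n ≥ 1, let Γ be a subgroup of GL_n(ℤ), and let h, h' be neighbouring perfect forms with σ = D(h), ρ = D(h'), and τ = σ ∩ ρ, where σ and ρ are not in the same Γ-orbit. Assume that the setwise stabilizer Γ_σ is finite. Then the set of facets of σ that are Γ-translates of τ equals the Γ_σ-orbit of τ, and its cardinality equals |Γ_σ| / |Γ_τ| (here Γ_τ = Γ_σ ∩ Γ_ρ is a subgroup of Γ_σ). -/

import Mathlib

open Matrix

noncomputable section

/-- The real vector space of `n × n` real symmetric matrices, as a submodule of matrices. -/
def SymMat (n : ℕ) : Submodule ℝ (Matrix (Fin n) (Fin n) ℝ) where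
  carrier := { A | Aᵀ = A }
  add_mem' := by
    intro a b ha hb
    simp only [Set.mem_setOf_eq] at *
    rw [Matrix.transpose_add, ha, hb]
  zero_mem' := by simp
  smul_mem' := by
    intro c a ha
    simp only [Set.mem_setOf_eq] at *
    rw [Matrix.transpose_smul, ha]

/-- The ℝ-linear endomorphism `X ↦ gᵀ X g` of the space of symmetric matrices. -/
def congrSym (n : ℕ) (g : Matrix (Fin n) (Fin n) ℝ) : SymMat n →ₗ[ℝ] SymMat n where
  toFun X := ⟨gᵀ * X.1 * g, by
    have hX : (X.1)ᵀ = X.1 := X.2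
    show (gᵀ * X.1 * g)ᵀ = gᵀ * X.1 * g
    rw [Matrix.transpose_mul, Matrix.transpose_mul, Matrix.transpose_transpose, hX,
      Matrix.mul_assoc]⟩
  map_add' X Y := by
    ext1
    show gᵀ * (X.1 + Y.1) * g = gᵀ * X.1 * g + gᵀ * Y.1 * g
    rw [Matrix.mul_add, Matrix.add_mul]
  map_smul' c X := by
    ext1
    show gᵀ * (c • X.1) * g = c • (gᵀ * X.1 * g)
    rw [Matrix.mul_smul, Matrix.smul_mul]

/-- The real matrix obtained from an integer matrix. -/
def realMat {n : ℕ} (g : Matrix (Fin n) (Fin n) ℤ) : Matrix (Fin n) (Fin n) ℝ :=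
  g.map (Int.cast : ℤ → ℝ)

/-- The action of `GL n ℤ` on symmetric matrices: `γ · X = (γ⁻¹)ᵀ X γ⁻¹`. -/
def intAct (n : ℕ) (γ : GL (Fin n) ℤ) : SymMat n →ₗ[ℝ] SymMat n :=
  congrSym n (realMat ((γ⁻¹ : GL (Fin n) ℤ) : Matrix (Fin n) (Fin n) ℤ))

lemma realMat_mul {n : ℕ} (A B : Matrix (Fin n) (Fin n) ℤ) :
    realMat (A * B) = realMat A * realMat B := by
  simpa [realMat] using Matrix.map_mul (L := A) (M := B) (f := Int.castRingHom ℝ)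

lemma realMat_one {n : ℕ} : realMat (1 : Matrix (Fin n) (Fin n) ℤ) = 1 := by
  simpa [realMat] using Matrix.map_one (Int.cast : ℤ → ℝ) Int.cast_zero Int.cast_one

lemma intAct_one (n : ℕ) : intAct n 1 = LinearMap.id := by
  unfold intAct congrSym
  ext X
  simp [realMat_one]

lemma intAct_mul (n : ℕ) (g h : GL (Fin n) ℤ) :
    intAct n (g * h) = (intAct n g).comp (intAct n h) := by
  unfold intAct congrSym
  ext X
  simp [_root_.mul_inv_rev, realMat_mul, Matrix.transpose_mul, Matrix.mul_assoc]

/-- The action of `GL n ℤ` on subsets of symmetric matrices. -/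
def actSet (n : ℕ) (γ : GL (Fin n) ℤ) (S : Set (SymMat n)) : Set (SymMat n) :=
  (intAct n γ) '' S

lemma actSet_one (n : ℕ) (S : Set (SymMat n)) : actSet n 1 S = S := by
  simp [actSet, intAct_one]

lemma actSet_mul (n : ℕ) (g h : GL (Fin n) ℤ) (S : Set (SymMat n)) :
    actSet n (g * h) S = actSet n g (actSet n h S) := by
  rw [actSet, actSet, actSet, intAct_mul, ← Set.image_comp]; rfl

/-- The setwise stabilizer of `S` in the subgroup `Γ ≤ GL n ℤ`. -/
def stab (n : ℕ) (Γ : Subgroup (GL (Fin n) ℤ)) (S : Set (SymMat n)) : Subgroup (GL (Fin n) ℤ) where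
  carrier := { g | g ∈ Γ ∧ actSet n g S = S }
  one_mem' := ⟨Γ.one_mem, actSet_one n S⟩
  mul_mem' := by
    rintro a b ⟨haΓ, ha⟩ ⟨hbΓ, hb⟩
    exact ⟨Γ.mul_mem haΓ hbΓ, by rw [actSet_mul, hb, ha]⟩
  inv_mem' := by
    rintro a ⟨haΓ, ha⟩
    refine ⟨Γ.inv_mem haΓ, ?_⟩
    conv_lhs => rw [← ha]
    rw [← actSet_mul, inv_mul_cancel, actSet_one]
/-- The value `xᵀ h x` of a real quadratic form at an integer vector. -/
def intQuad (n : ℕ) (h : Matrix (Fin n) (Fin n) ℝ) (x : Fin n → ℤ) : ℝ :=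
  (fun i => (x i : ℝ)) ⬝ᵥ h.mulVec (fun i => (x i : ℝ))

/-- The set of minimal vectors of `h`: the nonzero integer vectors achieving the minimum
of `h` over nonzero integer vectors. -/
def minVecs (n : ℕ) (h : Matrix (Fin n) (Fin n) ℝ) : Set (Fin n → ℤ) :=
  { x | x ≠ 0 ∧ ∀ y : Fin n → ℤ, y ≠ 0 → intQuad n h x ≤ intQuad n h y }

/-- The symmetric rank-one matrix `x xᵀ` associated with an integer vector `x`. -/
def rankOneSym (n : ℕ) (x : Fin n → ℤ) : SymMat n :=
  ⟨Matrix.vecMulVec (fun i => (x i : ℝ)) (fun i => (x i : ℝ)), by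
    show (Matrix.vecMulVec _ _)ᵀ = _
    ext i j
    simp [Matrix.vecMulVec, mul_comm]⟩

/-- A positive definite form `h` is perfect if the rank-one matrices `x xᵀ`, for `x` a
minimal vector of `h`, span the space of symmetric matrices. -/
def IsPerfect (n : ℕ) (h : Matrix (Fin n) (Fin n) ℝ) : Prop :=
  h.PosDef ∧ Submodule.span ℝ (rankOneSym n '' minVecs n h) = ⊤

/-- The Voronoi domain of `h`: all nonnegative real linear combinations of the matrices
`x xᵀ` for `x` a minimal vector of `h`. -/
def VorDom (n : ℕ) (h : Matrix (Fin n) (Fin n) ℝ) : Set (SymMat n) :=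
  { M | ∃ (s : Finset (Fin n → ℤ)) (c : (Fin n → ℤ) → ℝ),
      (∀ x ∈ s, x ∈ minVecs n h) ∧ (∀ x ∈ s, 0 ≤ c x) ∧
      M = ∑ x ∈ s, c x • rankOneSym n x }

/-- `τ` is a facet of the convex cone `C`: an extreme subset whose ℝ-linear span is a
hyperplane (codimension-one subspace). -/
def IsFacetOf (n : ℕ) (C τ : Set (SymMat n)) : Prop :=
  IsExtreme ℝ C τ ∧
    Module.finrank ℝ (Submodule.span ℝ τ) + 1 = Module.finrank ℝ (SymMat n)

/-- Two perfect forms are neighbours if their (distinct) Voronoi domains intersect in a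
common facet. -/
def Neighbours (n : ℕ) (h h' : Matrix (Fin n) (Fin n) ℝ) : Prop :=
  IsPerfect n h ∧ IsPerfect n h' ∧ VorDom n h ≠ VorDom n h' ∧
    IsFacetOf n (VorDom n h) (VorDom n h ∩ VorDom n h') ∧
    IsFacetOf n (VorDom n h') (VorDom n h ∩ VorDom n h')

/-- Standing assumption (a theorem of Voronoi reduction theory): every facet of the
Voronoi domain of a perfect form is contained in exactly two Voronoi domains of perfect
forms, and is their intersection. -/
def StandingAssumption (n : ℕ) : Prop :=
  ∀ h : Matrix (Fin n) (Fin n) ℝ, IsPerfect n h →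
    ∀ τ : Set (SymMat n), IsFacetOf n (VorDom n h) τ →
      ∃ h' : Matrix (Fin n) (Fin n) ℝ, IsPerfect n h' ∧ VorDom n h' ≠ VorDom n h ∧
        τ = VorDom n h ∩ VorDom n h' ∧
        ∀ h'' : Matrix (Fin n) (Fin n) ℝ, IsPerfect n h'' → τ ⊆ VorDom n h'' →
          VorDom n h'' = VorDom n h ∨ VorDom n h'' = VorDom n h'

/-!
If `g ∈ Γ` carries `τ` onto a facet of `σ`, then `g σ` and `g ρ` are Voronoi domains of perfect
forms containing that facet, so by the standing assumption each of them is `σ` or the neighbour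
of `σ` across `g τ`; they are distinct, so one of them is `σ`, and `g ρ = σ` is ruled out by the
orbit hypothesis. Hence `g ∈ Γ_σ`. In particular `Γ_τ ≤ Γ_σ` is the stabilizer of `τ` in `Γ_σ`,
and the count is the orbit–stabilizer theorem.
-/

open scoped Pointwise

theorem IsExtreme.image_of_injective {𝕜 E F : Type*} [Ring 𝕜] [PartialOrder 𝕜] [IsOrderedRing 𝕜]
    [AddCommGroup E] [Module 𝕜 E] [AddCommGroup F] [Module 𝕜 F] {A B : Set E}
    (hAB : IsExtreme 𝕜 A B) (f : E →ₗ[𝕜] F) (hf : Function.Injective f) :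
    IsExtreme 𝕜 (f '' A) (f '' B) := by
  refine ⟨Set.image_mono hAB.subset, ?_⟩
  rintro _ ⟨x, hx, rfl⟩ _ ⟨y, hy, rfl⟩ _ ⟨z, hz, rfl⟩ hzxy
  rw [← LinearMap.coe_toAffineMap, ← image_openSegment] at hzxy
  obtain ⟨w, hw, hwz⟩ := hzxy
  rw [hf hwz] at hw
  exact Set.mem_image_of_mem f (hAB.left_mem_of_mem_openSegment hx hy hz hw)

theorem Subgroup.card_image_smul_eq_card_div {G α : Type*} [Group G] [MulAction G α]
    (H : Subgroup G) [Finite H] (a : α) :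
    Nat.card ((· • a) '' (H : Set G)) = Nat.card H / Nat.card ↥(H ⊓ MulAction.stabilizer G a) := by
  have horbit : (· • a) '' (H : Set G) = MulAction.orbit H a := by
    ext; simp [MulAction.orbit, Subgroup.smul_def]
  have hstab : MulAction.stabilizer H a = (MulAction.stabilizer G a).subgroupOf H := rfl
  have hcard := Subgroup.relIndex_mul_relIndex ⊥ (H ⊓ MulAction.stabilizer G a) H
    bot_le inf_le_left
  rw [Subgroup.relIndex_bot_left, Subgroup.relIndex_bot_left, Subgroup.inf_relIndex_left] at hcard
  have : Finite ↥(H ⊓ MulAction.stabilizer G a) :=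
    Finite.of_injective _ (Subgroup.inclusion_injective inf_le_left)
  rw [horbit, Nat.card_coe_set_eq, ← MulAction.index_stabilizer, hstab, ← hcard,
    Nat.mul_div_cancel_left _ Nat.card_pos]
  rfl

section GLAction

variable {n : ℕ}

instance : MulAction (GL (Fin n) ℤ) (SymMat n) where
  smul γ X := intAct n γ X
  one_smul X := show intAct n 1 X = X by rw [intAct_one]; rfl
  mul_smul g h X := show intAct n (g * h) X = intAct n g (intAct n h X) by rw [intAct_mul]; rfl

theorem actSet_eq_smul (γ : GL (Fin n) ℤ) (S : Set (SymMat n)) : actSet n γ S = γ • S := rfl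

theorem stab_eq_inf_stabilizer (Γ : Subgroup (GL (Fin n) ℤ)) (S : Set (SymMat n)) :
    stab n Γ S = Γ ⊓ MulAction.stabilizer (GL (Fin n) ℤ) S := rfl

theorem mem_stab_iff {Γ : Subgroup (GL (Fin n) ℤ)} {S : Set (SymMat n)} {g : GL (Fin n) ℤ} :
    g ∈ stab n Γ S ↔ g ∈ Γ ∧ g • S = S := Iff.rfl

def intActEquiv (γ : GL (Fin n) ℤ) : SymMat n ≃ₗ[ℝ] SymMat n :=
  LinearEquiv.ofLinearMap (intAct n γ) (intAct n γ⁻¹)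
    (by rw [← intAct_mul, mul_inv_cancel, intAct_one])
    (by rw [← intAct_mul, inv_mul_cancel, intAct_one])

theorem smul_set_eq_image_intActEquiv (γ : GL (Fin n) ℤ) (S : Set (SymMat n)) :
    γ • S = intActEquiv γ '' S := rfl

theorem IsFacetOf.smul {C τ : Set (SymMat n)} (hCτ : IsFacetOf n C τ) (γ : GL (Fin n) ℤ) :
    IsFacetOf n (γ • C) (γ • τ) := by
  rw [smul_set_eq_image_intActEquiv, smul_set_eq_image_intActEquiv]
  refine ⟨hCτ.1.image_of_injective _ (intActEquiv γ).injective, ?_⟩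
  rw [Submodule.span_image_linearEquiv, LinearEquiv.finrank_map_eq]
  exact hCτ.2

end GLAction

section Forms

variable {n : ℕ}

theorem realMat_inv_mul (γ : GL (Fin n) ℤ) :
    realMat (↑γ⁻¹ : Matrix (Fin n) (Fin n) ℤ) * realMat ↑γ = 1 := by
  rw [← realMat_mul, Units.inv_mul, realMat_one]

theorem realMat_mul_inv (γ : GL (Fin n) ℤ) :
    realMat (↑γ : Matrix (Fin n) (Fin n) ℤ) * realMat ↑γ⁻¹ = 1 := by
  rw [← realMat_mul, Units.mul_inv, realMat_one]

def castVec (x : Fin n → ℤ) : Fin n → ℝ := fun i => (x i : ℝ)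

theorem castVec_mulVec (A : Matrix (Fin n) (Fin n) ℤ) (x : Fin n → ℤ) :
    castVec (A *ᵥ x) = realMat A *ᵥ castVec x :=
  funext fun i => (Int.castRingHom ℝ).map_mulVec A x i

def contragredient (γ : GL (Fin n) ℤ) : (Fin n → ℤ) ≃ (Fin n → ℤ) where
  toFun x := (↑γ⁻¹ : Matrix (Fin n) (Fin n) ℤ)ᵀ *ᵥ x
  invFun x := (↑γ : Matrix (Fin n) (Fin n) ℤ)ᵀ *ᵥ x
  left_inv x := by simp [Matrix.mulVec_mulVec, ← Matrix.transpose_mul]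
  right_inv x := by simp [Matrix.mulVec_mulVec, ← Matrix.transpose_mul]

theorem castVec_contragredient (γ : GL (Fin n) ℤ) (x : Fin n → ℤ) :
    castVec (contragredient γ x) = (realMat ↑γ⁻¹)ᵀ *ᵥ castVec x := by
  rw [contragredient, Equiv.coe_fn_mk, castVec_mulVec]
  rfl

theorem intAct_rankOneSym (γ : GL (Fin n) ℤ) (x : Fin n → ℤ) :
    intAct n γ (rankOneSym n x) = rankOneSym n (contragredient γ x) := by
  apply Subtype.ext
  change (realMat ↑γ⁻¹)ᵀ * vecMulVec (castVec x) (castVec x) * realMat ↑γ⁻¹ =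
    vecMulVec (castVec (contragredient γ x)) (castVec (contragredient γ x))
  rw [castVec_contragredient, Matrix.mul_vecMulVec, Matrix.vecMulVec_mul, Matrix.mulVec_transpose]

def formAct (γ : GL (Fin n) ℤ) (h : Matrix (Fin n) (Fin n) ℝ) : Matrix (Fin n) (Fin n) ℝ :=
  realMat ↑γ * h * (realMat ↑γ)ᵀ

theorem formAct_inv_formAct (γ : GL (Fin n) ℤ) (h : Matrix (Fin n) (Fin n) ℝ) :
    formAct γ⁻¹ (formAct γ h) = h := by
  have hT : (realMat (↑γ : Matrix (Fin n) (Fin n) ℤ))ᵀ * (realMat ↑γ⁻¹)ᵀ = 1 := by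
    rw [← Matrix.transpose_mul, realMat_inv_mul, Matrix.transpose_one]
  simp only [formAct, Matrix.mul_assoc, hT, Matrix.mul_one]
  rw [← Matrix.mul_assoc, realMat_inv_mul, Matrix.one_mul]

theorem intQuad_formAct_contragredient (γ : GL (Fin n) ℤ) (h : Matrix (Fin n) (Fin n) ℝ)
    (x : Fin n → ℤ) : intQuad n (formAct γ h) (contragredient γ x) = intQuad n h x := by
  have hT : (realMat (↑γ : Matrix (Fin n) (Fin n) ℤ))ᵀ * (realMat ↑γ⁻¹)ᵀ = 1 := by
    rw [← Matrix.transpose_mul, realMat_inv_mul, Matrix.transpose_one]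
  change castVec (contragredient γ x) ⬝ᵥ formAct γ h *ᵥ castVec (contragredient γ x) =
    castVec x ⬝ᵥ h *ᵥ castVec x
  rw [castVec_contragredient, Matrix.mulVec_mulVec, formAct, Matrix.mul_assoc, hT,
    Matrix.mul_one, Matrix.mulVec_transpose, ← Matrix.dotProduct_mulVec, Matrix.mulVec_mulVec,
    ← Matrix.mul_assoc, realMat_inv_mul, Matrix.one_mul]

theorem contragredient_eq_zero_iff (γ : GL (Fin n) ℤ) {x : Fin n → ℤ} :
    contragredient γ x = 0 ↔ x = 0 :=
  (contragredient γ).injective.eq_iff' (Matrix.mulVec_zero (↑γ⁻¹ : Matrix (Fin n) (Fin n) ℤ)ᵀ)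

theorem minVecs_formAct (γ : GL (Fin n) ℤ) (h : Matrix (Fin n) (Fin n) ℝ) :
    minVecs n (formAct γ h) = contragredient γ '' minVecs n h := by
  ext y
  obtain ⟨x, rfl⟩ := (contragredient γ).surjective y
  rw [(contragredient γ).injective.mem_set_image]
  simp only [minVecs, Set.mem_setOf_eq, ne_eq, contragredient_eq_zero_iff]
  rw [← (contragredient γ).forall_congr_right]
  simp only [contragredient_eq_zero_iff, intQuad_formAct_contragredient]

theorem posDef_formAct {h : Matrix (Fin n) (Fin n) ℝ} (hh : h.PosDef) (γ : GL (Fin n) ℤ) :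
    (formAct γ h).PosDef := by
  have hinj : Function.Injective (realMat (↑γ : Matrix (Fin n) (Fin n) ℤ)).vecMul :=
    Function.LeftInverse.injective (g := fun y => y ᵥ* realMat ↑γ⁻¹) fun x => by
      simp only [Matrix.vecMul_vecMul, realMat_mul_inv, Matrix.vecMul_one]
  simpa only [formAct, Matrix.conjTranspose_eq_transpose_of_trivial] using
    hh.mul_mul_conjTranspose_same hinj

theorem isPerfect_formAct {h : Matrix (Fin n) (Fin n) ℝ} (hh : IsPerfect n h)
    (γ : GL (Fin n) ℤ) : IsPerfect n (formAct γ h) := by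
  have himage : rankOneSym n '' minVecs n (formAct γ h) =
      intActEquiv γ '' (rankOneSym n '' minVecs n h) := by
    rw [minVecs_formAct, Set.image_image, Set.image_image]
    exact Set.image_congr fun x _ => (intAct_rankOneSym γ x).symm
  refine ⟨posDef_formAct hh.1 γ, ?_⟩
  rw [himage, Submodule.span_image_linearEquiv, hh.2, Submodule.map_top, LinearEquiv.range]

theorem smul_vorDom_subset (γ : GL (Fin n) ℤ) (h : Matrix (Fin n) (Fin n) ℝ) :
    γ • VorDom n h ⊆ VorDom n (formAct γ h) := by
  rintro _ ⟨_, ⟨s, c, hs, hc, rfl⟩, rfl⟩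
  refine ⟨s.map (contragredient γ).toEmbedding, c ∘ (contragredient γ).symm, ?_, ?_, ?_⟩
  · simp only [Finset.forall_mem_map, minVecs_formAct]
    exact fun x hx => Set.mem_image_of_mem _ (hs x hx)
  · simpa only [Finset.forall_mem_map, Function.comp_apply, Equiv.coe_toEmbedding,
      Equiv.symm_apply_apply] using hc
  · change intAct n γ _ = _
    simp only [map_sum, map_smul, intAct_rankOneSym, Finset.sum_map, Equiv.coe_toEmbedding,
      Function.comp_apply, Equiv.symm_apply_apply]

theorem smul_vorDom (γ : GL (Fin n) ℤ) (h : Matrix (Fin n) (Fin n) ℝ) :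
    γ • VorDom n h = VorDom n (formAct γ h) := by
  refine (smul_vorDom_subset γ h).antisymm ?_
  have := Set.smul_set_mono (a := γ) (smul_vorDom_subset γ⁻¹ (formAct γ h))
  rwa [smul_inv_smul, formAct_inv_formAct] at this

end Forms

theorem smul_vorDom_eq_or_of_isFacetOf_smul_inter {n : ℕ} (standing : StandingAssumption n)
    {h h' : Matrix (Fin n) (Fin n) ℝ} (hh : IsPerfect n h) (hh' : IsPerfect n h')
    (hne : VorDom n h ≠ VorDom n h') {g : GL (Fin n) ℤ}
    (hfacet : IsFacetOf n (VorDom n h) (g • (VorDom n h ∩ VorDom n h'))) :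
    g • VorDom n h = VorDom n h ∨ g • VorDom n h' = VorDom n h := by
  obtain ⟨_, -, -, -, hdomains⟩ := standing h hh _ hfacet
  have hσ := hdomains _ (isPerfect_formAct hh g)
    (smul_vorDom g h ▸ Set.smul_set_mono Set.inter_subset_left)
  have hρ := hdomains _ (isPerfect_formAct hh' g)
    (smul_vorDom g h' ▸ Set.smul_set_mono Set.inter_subset_right)
  rw [← smul_vorDom] at hσ hρ
  rcases hσ with hσ | hσ
  · exact .inl hσ
  rcases hρ with hρ | hρ
  · exact .inr hρ
  · exact absurd (MulAction.injective g (hσ.trans hρ.symm)) hne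

theorem statement11_general (n : ℕ) (standing : StandingAssumption n)
    (Γ : Subgroup (GL (Fin n) ℤ)) (h h' : Matrix (Fin n) (Fin n) ℝ)
    (hnb : Neighbours n h h')
    (σ ρ τ : Set (SymMat n)) (hσ : σ = VorDom n h) (hρ : ρ = VorDom n h')
    (hτ : τ = σ ∩ ρ)
    (horb : ¬ ∃ g ∈ Γ, actSet n g σ = ρ)
    (hfin : ((stab n Γ σ : Set (GL (Fin n) ℤ))).Finite) :
    { τ' : Set (SymMat n) | IsFacetOf n σ τ' ∧ ∃ g ∈ Γ, actSet n g τ = τ' } =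
      (fun g : GL (Fin n) ℤ => actSet n g τ) '' ↑(stab n Γ σ) ∧
    Nat.card ((fun g : GL (Fin n) ℤ => actSet n g τ) '' ↑(stab n Γ σ) : Set (Set (SymMat n))) =
      Nat.card (stab n Γ σ) / Nat.card (stab n Γ τ) := by
  obtain ⟨hh, hh', hne, hfacet, -⟩ := hnb
  simp only [actSet_eq_smul] at horb ⊢
  have hmem_stab : ∀ g ∈ Γ, IsFacetOf n σ (g • τ) → g ∈ stab n Γ σ := fun g hg hgτ => by
    subst hσ hρ hτ
    refine ⟨hg, (smul_vorDom_eq_or_of_isFacetOf_smul_inter standing hh hh' hne hgτ).resolve_right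
      fun hgρ => horb ⟨g⁻¹, Γ.inv_mem hg, by rw [← hgρ, inv_smul_smul]⟩⟩
  rw [← hσ, ← hρ, ← hτ] at hfacet
  have hstab_le : stab n Γ τ ≤ stab n Γ σ := fun g hg =>
    hmem_stab g (mem_stab_iff.1 hg).1 (by rwa [(mem_stab_iff.1 hg).2])
  have hstab_τ : stab n Γ τ = stab n Γ σ ⊓ MulAction.stabilizer _ τ := by
    rw [stab_eq_inf_stabilizer, stab_eq_inf_stabilizer] at hstab_le ⊢
    exact le_antisymm (le_inf hstab_le inf_le_right) (inf_le_inf_right _ inf_le_left)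
  refine ⟨Set.ext fun τ' => ⟨?_, ?_⟩, ?_⟩
  · rintro ⟨hτ', g, hg, rfl⟩
    exact ⟨g, hmem_stab g hg hτ', rfl⟩
  · rintro ⟨g, hg, rfl⟩
    obtain ⟨hgΓ, hgσ⟩ := mem_stab_iff.1 hg
    exact ⟨by simpa only [hgσ] using hfacet.smul g, g, hgΓ, rfl⟩
  · have := hfin.to_subtype
    rw [hstab_τ, Subgroup.card_image_smul_eq_card_div]

/-- Let `Γ ≤ GL_n(ℤ)` and `h, h'` neighbouring perfect forms with `σ = D(h)`,
`ρ = D(h')`, `τ = σ ∩ ρ`, where `σ` and `ρ` are not in the same `Γ`-orbit, and `Γ_σ` finite.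
Then the set of facets of `σ` that are `Γ`-translates of `τ` equals the `Γ_σ`-orbit of `τ`,
and its cardinality is `|Γ_σ| / |Γ_τ|`. -/
theorem statement11 (n : ℕ) (hn : 1 ≤ n) (standing : StandingAssumption n)
    (Γ : Subgroup (GL (Fin n) ℤ)) (h h' : Matrix (Fin n) (Fin n) ℝ)
    (hnb : Neighbours n h h')
    (σ ρ τ : Set (SymMat n)) (hσ : σ = VorDom n h) (hρ : ρ = VorDom n h')
    (hτ : τ = σ ∩ ρ)
    (horb : ¬ ∃ g ∈ Γ, actSet n g σ = ρ)
    (hfin : ((stab n Γ σ : Set (GL (Fin n) ℤ))).Finite) :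
    { τ' : Set (SymMat n) | IsFacetOf n σ τ' ∧ ∃ g ∈ Γ, actSet n g τ = τ' } =
      (fun g : GL (Fin n) ℤ => actSet n g τ) '' ↑(stab n Γ σ) ∧
    Nat.card ((fun g : GL (Fin n) ℤ => actSet n g τ) '' ↑(stab n Γ σ) : Set (Set (SymMat n))) =
      Nat.card (stab n Γ σ) / Nat.card (stab n Γ τ) :=
  statement11_general n standing Γ h h' hnb σ ρ τ hσ hρ hτ horb hfin
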